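/- Let ℬ ≤ M(n,ℂ) be a non-trivial irreducible matrix Lie algebra, i.e., the only subspaces U ≤ ℂⁿ with ℬ(U) ⊆ U are 0 and ℂⁿ, and ℬ is not the zero subspace of M(1,ℂ). Then ℬ does not have a shrunk subspace: for every subspace U ≤ ℂⁿ, dim(ℬ(U)) ≥ dim(U). -/

import Mathlib

/-- The image `ℬ(U)` of a subspace `U ≤ ℂⁿ` under a matrix space `ℬ ≤ M(n,ℂ)`. -/
noncomputable def matImage {n : ℕ} (ℬ : Submodule ℂ (Matrix (Fin n) (Fin n) ℂ))
    (U : Submodule ℂ (Fin n → ℂ)) : Submodule ℂ (Fin n → ℂ) :=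
  Submodule.span ℂ {v | ∃ B ∈ ℬ, ∃ u ∈ U, v = B.mulVec u}

/-!
The function `U ↦ dim ℬ(U) - dim U` is submodular, so among its minimisers there is a largest
one, `U₀`. For `X ∈ ℬ`, conjugation by `exp (t X)` maps the Lie algebra `ℬ` into itself, since
`Ad (exp (t X)) = exp (t ad X)`; hence `exp (t X)` maps minimisers to minimisers, in particular
`U₀` into itself, and differentiating at `t = 0` gives `X U₀ ≤ U₀`. By irreducibility `U₀` is `0`
or `ℂⁿ`. If some subspace is shrunk, `U₀ ≠ 0`, so `U₀ = ℂⁿ` and `ℬ(ℂⁿ)` is a proper invariant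
subspace, i.e. `0`. Then `ℬ = 0`, every subspace is invariant, and this forces `n = 1`.
-/

open NormedSpace

namespace ContinuousLinearMap

variable (𝕂 𝔸 : Type*) [NontriviallyNormedField 𝕂] [NormedRing 𝔸] [NormedAlgebra 𝕂 𝔸]

noncomputable def mulLeftRingHom : 𝔸 →+* 𝔸 →L[𝕂] 𝔸 where
  toFun := mul 𝕂 𝔸
  map_one' := by ext; simp
  map_mul' _ _ := by ext; simp [mul_assoc]
  map_zero' := by simp
  map_add' := by simp

noncomputable def mulRightRingHom : 𝔸ᵐᵒᵖ →+* 𝔸 →L[𝕂] 𝔸 where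
  toFun y := (mul 𝕂 𝔸).flip y.unop
  map_one' := by ext; simp
  map_mul' _ _ := by ext; simp [mul_assoc]
  map_zero' := by ext; simp
  map_add' _ _ := by ext; simp

end ContinuousLinearMap

namespace NormedSpace

variable {𝕂 𝔸 : Type*} [RCLike 𝕂] [NormedRing 𝔸] [NormedAlgebra 𝕂 𝔸]

variable (𝕂) in
theorem mem_eball_expSeries_radius (x : 𝔸) : x ∈ Metric.eball 0 (expSeries 𝕂 𝔸).radius :=
  (expSeries_radius_eq_top 𝕂 𝔸).symm ▸ edist_lt_top _ _

theorem exp_apply_mem_of_mapsTo {E : Type*} [NormedAddCommGroup E] [NormedSpace 𝕂 E]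
    [CompleteSpace E] {S : Submodule 𝕂 E} (hS : IsClosed (S : Set E)) {D : E →L[𝕂] E}
    (hD : Set.MapsTo D S S) {x : E} (hx : x ∈ S) : exp D x ∈ S := by
  have hsum := (exp_series_hasSum_exp' (𝕂 := 𝕂) D).mapL (ContinuousLinearMap.apply 𝕂 E x)
  refine hS.mem_of_tendsto hsum.tendsto_sum_nat (.of_forall fun N => S.sum_mem fun k _ => ?_)
  simpa only [ContinuousLinearMap.apply_apply, smul_apply, FunLike.coe_pow_eq_iterate]
    using S.smul_mem _ (hD.iterate k hx)

variable [CompleteSpace 𝔸]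

open ContinuousLinearMap in
theorem exp_mul_mul_exp_neg_eq_exp_ad_apply (X A : 𝔸) :
    exp X * A * exp (-X) = exp (mul 𝕂 𝔸 X - (mul 𝕂 𝔸).flip X) A := by
  have hcomm : Commute (mulLeftRingHom 𝕂 𝔸 X) (mulRightRingHom 𝕂 𝔸 (.op (-X))) :=
    ext fun B => by simp [mulLeftRingHom, mulRightRingHom, mul_assoc]
  have hL := map_exp_of_mem_ball (mulLeftRingHom 𝕂 𝔸) (mul 𝕂 𝔸).continuous X
    (mem_eball_expSeries_radius 𝕂 X)
  have hR := map_exp_of_mem_ball (mulRightRingHom 𝕂 𝔸)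
    ((mul 𝕂 𝔸).flip.continuous.comp MulOpposite.continuous_unop) (.op (-X))
    (mem_eball_expSeries_radius 𝕂 _)
  have hLR := exp_add_of_commute_of_mem_ball hcomm (mem_eball_expSeries_radius 𝕂 _)
    (mem_eball_expSeries_radius 𝕂 _)
  rw [← hL, ← hR, exp_op] at hLR
  simp only [mulLeftRingHom, mulRightRingHom, RingHom.coe_mk, MonoidHom.coe_mk, OneHom.coe_mk,
    MulOpposite.unop_op, map_neg, ← sub_eq_add_neg] at hLR
  simp [hLR, mul_assoc]

theorem exp_mul_mul_exp_neg_mem {ℬ : Submodule 𝕂 𝔸} (hℬ : IsClosed (ℬ : Set 𝔸)) {X : 𝔸}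
    (hX : ∀ A ∈ ℬ, X * A - A * X ∈ ℬ) {A : 𝔸} (hA : A ∈ ℬ) : exp X * A * exp (-X) ∈ ℬ :=
  exp_mul_mul_exp_neg_eq_exp_ad_apply (𝕂 := 𝕂) X A ▸
    exp_apply_mem_of_mapsTo hℬ (fun B hB => by simpa using hX B hB) hA

end NormedSpace

namespace Matrix

variable {m 𝕂 : Type*} [Fintype m] [DecidableEq m] [RCLike 𝕂]

open scoped Norms.Operator

theorem exp_mul_mul_exp_neg_mem {ℬ : Submodule 𝕂 (Matrix m m 𝕂)} {X : Matrix m m 𝕂}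
    (hX : ∀ A ∈ ℬ, X * A - A * X ∈ ℬ) {A : Matrix m m 𝕂} (hA : A ∈ ℬ) :
    exp X * A * exp (-X) ∈ ℬ :=
  NormedSpace.exp_mul_mul_exp_neg_mem (Submodule.closed_of_finiteDimensional ℬ) hX hA

theorem mulVec_mem_of_forall_exp_smul_mulVec_mem {S : Submodule 𝕂 (m → 𝕂)} {X : Matrix m m 𝕂}
    (h : ∀ t : 𝕂, ∀ u ∈ S, exp (t • X) *ᵥ u ∈ S) {u : m → 𝕂} (hu : u ∈ S) : X *ᵥ u ∈ S := by
  let evalAt : Matrix m m 𝕂 →L[𝕂] (m → 𝕂) :=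
    LinearMap.toContinuousLinearMap ((LinearMap.applyₗ u).comp toLin'.toLinearMap)
  have hderiv := evalAt.hasFDerivAt.comp_hasDerivAt (0 : 𝕂) (hasDerivAt_exp_smul_const X 0)
  rw [zero_smul, exp_zero, one_mul] at hderiv
  refine S.closed_of_finiteDimensional.mem_of_tendsto (hasDerivAt_iff_tendsto_slope.mp hderiv)
    (.of_forall fun t => ?_)
  rw [slope_def_module]
  exact S.smul_mem _ (S.sub_mem (h t u hu) (by simpa [evalAt] using hu))

end Matrix

open Matrix Module

theorem exists_isGreatest_minimizer_of_submodular {α : Type*} [Lattice α] [WellFoundedGT α]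
    [Nonempty α] {f : α → ℤ} (hbdd : BddBelow (Set.range f))
    (hf : ∀ a b, f (a ⊔ b) + f (a ⊓ b) ≤ f a + f b) :
    ∃ a, IsGreatest {b | ∀ c, f b ≤ f c} a := by
  obtain ⟨a₀, ha₀⟩ := Int.csInf_mem (Set.range_nonempty f) hbdd
  have hmin : ∀ c, f a₀ ≤ f c := fun c => ha₀ ▸ csInf_le hbdd ⟨c, rfl⟩
  obtain ⟨a, ha, hmax⟩ := wellFounded_gt.has_min {b | ∀ c, f b ≤ f c} ⟨a₀, hmin⟩
  refine ⟨a, ha, fun b hb => ?_⟩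
  have hsup : a ⊔ b ∈ {b | ∀ c, f b ≤ f c} := fun c => by
    linarith [hf a b, ha (a ⊔ b), ha (a ⊓ b), hb a, ha c]
  by_contra hba
  exact hmax _ hsup (left_lt_sup.mpr hba)

theorem Submodule.finrank_le_one_of_forall_eq_bot_or_eq_top {K V : Type*} [DivisionRing K]
    [AddCommGroup V] [Module K V] (h : ∀ W : Submodule K V, W = ⊥ ∨ W = ⊤) :
    finrank K V ≤ 1 := by
  rcases subsingleton_or_nontrivial V with hV | hV
  · simp [finrank_zero_of_subsingleton]
  obtain ⟨v, hv⟩ := exists_ne (0 : V)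
  rcases h (K ∙ v) with hbot | htop
  · exact absurd (Submodule.span_singleton_eq_bot.mp hbot) hv
  · rw [← finrank_top K V, ← htop, finrank_span_singleton hv]

section MatImage

variable {n : ℕ} {ℬ : Submodule ℂ (Matrix (Fin n) (Fin n) ℂ)}

theorem matImage_le_iff {U W : Submodule ℂ (Fin n → ℂ)} :
    matImage ℬ U ≤ W ↔ ∀ B ∈ ℬ, ∀ u ∈ U, B *ᵥ u ∈ W := by
  rw [matImage, Submodule.span_le]
  constructor
  · intro h B hB u hu
    exact h ⟨B, hB, u, hu, rfl⟩
  · rintro h v ⟨B, hB, u, hu, rfl⟩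
    exact h B hB u hu

theorem mulVec_mem_matImage {U : Submodule ℂ (Fin n → ℂ)} {B : Matrix (Fin n) (Fin n) ℂ}
    {u : Fin n → ℂ} (hB : B ∈ ℬ) (hu : u ∈ U) : B *ᵥ u ∈ matImage ℬ U :=
  Submodule.subset_span ⟨B, hB, u, hu, rfl⟩

theorem matImage_mono {U W : Submodule ℂ (Fin n → ℂ)} (h : U ≤ W) :
    matImage ℬ U ≤ matImage ℬ W :=
  matImage_le_iff.mpr fun _ hB _ hu => mulVec_mem_matImage hB (h hu)

@[simp]
theorem matImage_bot : matImage ℬ ⊥ = ⊥ :=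
  le_bot_iff.mp <| matImage_le_iff.mpr fun B _ u hu => by simp [(Submodule.mem_bot ℂ).mp hu]

theorem matImage_sup (U W : Submodule ℂ (Fin n → ℂ)) :
    matImage ℬ (U ⊔ W) = matImage ℬ U ⊔ matImage ℬ W := by
  refine le_antisymm (matImage_le_iff.mpr fun B hB u hu => ?_)
    (sup_le (matImage_mono le_sup_left) (matImage_mono le_sup_right))
  obtain ⟨x, hx, y, hy, rfl⟩ := Submodule.mem_sup.mp hu
  rw [mulVec_add]
  exact Submodule.add_mem_sup (mulVec_mem_matImage hB hx) (mulVec_mem_matImage hB hy)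

theorem eq_bot_of_matImage_top_eq_bot (h : matImage ℬ ⊤ = ⊥) : ℬ = ⊥ :=
  (Submodule.eq_bot_iff ℬ).mpr fun B hB => toLin'.injective <| LinearMap.ext fun v => by
    simpa [h] using mulVec_mem_matImage (U := ⊤) hB (Submodule.mem_top (x := v))

theorem matImage_map_le {P Q : Matrix (Fin n) (Fin n) ℂ} (hPQ : P * Q = 1)
    (hℬ : ∀ B ∈ ℬ, Q * B * P ∈ ℬ) (U : Submodule ℂ (Fin n → ℂ)) :
    matImage ℬ (U.map (toLin' P)) ≤ (matImage ℬ U).map (toLin' P) := by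
  refine matImage_le_iff.mpr fun B hB _ ⟨u, hu, hPu⟩ => ⟨_, mulVec_mem_matImage (hℬ B hB) hu, ?_⟩
  simp only [← hPu, toLin'_apply, mulVec_mulVec, ← mul_assoc, hPQ, one_mul]

variable (ℬ) in
noncomputable def imageExcess (U : Submodule ℂ (Fin n → ℂ)) : ℤ :=
  finrank ℂ (matImage ℬ U) - finrank ℂ U

theorem bddBelow_range_imageExcess : BddBelow (Set.range (imageExcess ℬ)) := by
  refine ⟨-n, ?_⟩
  rintro _ ⟨U, rfl⟩
  have := U.finrank_le
  rw [finrank_fin_fun] at this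
  simp only [imageExcess]
  omega

theorem imageExcess_sup_add_inf_le (U W : Submodule ℂ (Fin n → ℂ)) :
    imageExcess ℬ (U ⊔ W) + imageExcess ℬ (U ⊓ W) ≤ imageExcess ℬ U + imageExcess ℬ W := by
  have hdom := Submodule.finrank_sup_add_finrank_inf_eq U W
  have himg := Submodule.finrank_sup_add_finrank_inf_eq (matImage ℬ U) (matImage ℬ W)
  have hinf := Submodule.finrank_mono
    (le_inf (matImage_mono (ℬ := ℬ) (inf_le_left : U ⊓ W ≤ U)) (matImage_mono inf_le_right))
  rw [imageExcess, imageExcess, imageExcess, imageExcess, matImage_sup]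
  omega

theorem imageExcess_map_le {P Q : Matrix (Fin n) (Fin n) ℂ} (hPQ : P * Q = 1) (hQP : Q * P = 1)
    (hℬ : ∀ B ∈ ℬ, Q * B * P ∈ ℬ) (U : Submodule ℂ (Fin n → ℂ)) :
    imageExcess ℬ (U.map (toLin' P)) ≤ imageExcess ℬ U := by
  have hinj : Function.Injective (toLin' P) := fun u v huv => by
    simpa [toLin'_apply, mulVec_mulVec, hQP] using congrArg (Q *ᵥ ·) huv
  have himg := Submodule.finrank_mono (matImage_map_le hPQ hℬ U)
  have hmap := Submodule.finrank_map_le (toLin' P) (matImage ℬ U)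
  have hdom := (Submodule.equivMapOfInjective _ hinj U).finrank_eq
  simp only [imageExcess]
  omega

theorem matImage_le_of_isGreatest_minimizer (hLie : ∀ A ∈ ℬ, ∀ B ∈ ℬ, A * B - B * A ∈ ℬ)
    {U : Submodule ℂ (Fin n → ℂ)}
    (hU : IsGreatest {W | ∀ W', imageExcess ℬ W ≤ imageExcess ℬ W'} U) : matImage ℬ U ≤ U := by
  refine matImage_le_iff.mpr fun B hB u hu => mulVec_mem_of_forall_exp_smul_mulVec_mem ?_ hu
  intro t w hw
  have hX : t • B ∈ ℬ := ℬ.smul_mem t hB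
  have hPQ : exp (t • B) * exp (-(t • B)) = 1 := by
    rw [← Matrix.exp_add_of_commute _ _ (Commute.refl (t • B)).neg_right, add_neg_cancel,
      exp_zero]
  have hQP : exp (-(t • B)) * exp (t • B) = 1 := by
    rw [← Matrix.exp_add_of_commute _ _ (Commute.refl (t • B)).neg_left, neg_add_cancel,
      exp_zero]
  have hconj : ∀ A ∈ ℬ, exp (-(t • B)) * A * exp (t • B) ∈ ℬ := fun A hA => by
    simpa only [neg_neg] using Matrix.exp_mul_mul_exp_neg_mem (X := -(t • B)) (fun C hC => by
      convert hLie C hC _ hX using 1; noncomm_ring) hA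
  exact hU.2 (fun W => (imageExcess_map_le hPQ hQP hconj U).trans (hU.1 W)) ⟨w, hw, rfl⟩

end MatImage

/-- A non-trivial irreducible matrix Lie algebra over `ℂ` has no shrunk subspace. -/
theorem irreducible_matrixLieAlgebra_no_shrunk {n : ℕ}
    (ℬ : Submodule ℂ (Matrix (Fin n) (Fin n) ℂ))
    (hLie : ∀ A ∈ ℬ, ∀ B ∈ ℬ, A * B - B * A ∈ ℬ)
    (hirr : ∀ U : Submodule ℂ (Fin n → ℂ), matImage ℬ U ≤ U → U = ⊥ ∨ U = ⊤)
    (hnontriv : ¬ (n = 1 ∧ ℬ = ⊥)) :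
    ∀ U : Submodule ℂ (Fin n → ℂ), Module.finrank ℂ U ≤ Module.finrank ℂ (matImage ℬ U) := by
  intro U
  by_contra hshrunk
  obtain ⟨U₀, hU₀⟩ := exists_isGreatest_minimizer_of_submodular bddBelow_range_imageExcess
    (imageExcess_sup_add_inf_le (ℬ := ℬ))
  have hneg : imageExcess ℬ U₀ < 0 := (hU₀.1 U).trans_lt (by simp only [imageExcess]; omega)
  rcases hirr U₀ (matImage_le_of_isGreatest_minimizer hLie hU₀) with rfl | rfl
  · simp [imageExcess] at hneg
    omega
  have htop : matImage ℬ ⊤ = ⊥ := (hirr _ (matImage_mono le_top)).resolve_right fun h => by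
    rw [imageExcess, h] at hneg
    simp at hneg
  have hle : n ≤ 1 := by
    simpa using Submodule.finrank_le_one_of_forall_eq_bot_or_eq_top fun W =>
      hirr W (((matImage_mono le_top).trans_eq htop).trans bot_le)
  have hpos : 0 < n := by
    rw [imageExcess, htop] at hneg
    simpa using hneg
  exact hnontriv ⟨by omega, eq_bot_of_matImage_top_eq_bot htop⟩
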